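/- arXiv:2311.18157 — 4 statements merged into one kernel-verified Lean document; each statement's English description precedes it below -/
import Mathlib

section
/- For the query Q_matrix(A,C) :- R_1(A,B), R_2(B,C) with R_2 = B × C a full Cartesian product and R_1 having no dangling tuples, the minimum size of a sub-database (R_1', R_2') with Q_matrix(R_1',R_2') = Q_matrix(R_1,R_2) and R_2' integral (i.e., R_2' = (π_B R_2') × C) equals |A| + |C| · x*, where x* is the minimum size of a subset B' ⊆ B such that every a ∈ A has some b ∈ B' with (a,b) ∈ R_1. -/
/-! Against the full product `B × C`, a sub-database `(S₁, B' × C)` produces the whole output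
`A × C` exactly when every `a` has an `S₁`-neighbour in `B'`. Such an `S₁` has at least `|A|`
tuples and such a `B'` is a cover of `R₁`, so `|S₁| + |B'|·|C| ≥ |A| + x*·|C|`; conversely the
graph of a choice function into a minimum cover attains this bound. -/

open Set

/-- `Q_matrix` semantics: `Q_matrix(X, Y) = {(a,c) : ∃ b, (a,b) ∈ X ∧ (b,c) ∈ Y}`. -/
def qmat {α β γ : Type} (X : Set (α × β)) (Y : Set (β × γ)) : Set (α × γ) :=
  {p | ∃ b, (p.1, b) ∈ X ∧ (b, p.2) ∈ Y}

/-- The covering number `x*`: the minimum size of `B' ⊆ B` such that every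
`a ∈ A` has some `b ∈ B'` with `(a,b) ∈ R₁`. -/
noncomputable def coverNum {α β : Type} (R1 : Set (α × β)) : ℕ :=
  sInf {n | ∃ B' : Set β, (∀ a : α, ∃ b ∈ B', (a, b) ∈ R1) ∧ n = B'.ncard}

section

variable {α β γ : Type}

theorem qmat_prod_univ (S : Set (α × β)) (B' : Set β) :
    qmat S (B' ×ˢ (univ : Set γ)) = {a | ∃ b ∈ B', (a, b) ∈ S} ×ˢ univ := by
  ext ⟨a, c⟩
  simp only [qmat, mem_prod, mem_univ, and_true]
  exact exists_congr fun b => and_comm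

theorem qmat_prod_univ_eq_univ_iff [Nonempty γ] (S : Set (α × β)) (B' : Set β) :
    qmat S (B' ×ˢ (univ : Set γ)) = univ ↔ ∀ a, ∃ b ∈ B', (a, b) ∈ S := by
  rw [qmat_prod_univ, prod_univ, ← preimage_univ, Prod.fst_surjective.preimage_injective.eq_iff,
    eq_univ_iff_forall]
  rfl

theorem qmat_univ_prod_univ {R : Set (α × β)} (hR : ∀ a, ∃ b, (a, b) ∈ R) :
    qmat R ((univ : Set β) ×ˢ (univ : Set γ)) = univ := by
  rw [qmat_prod_univ, prod_univ, ← preimage_univ (f := Prod.fst)]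
  exact congrArg _ (eq_univ_of_forall fun a => (hR a).imp fun _ hb => ⟨mem_univ _, hb⟩)

theorem coverNum_le_ncard {R : Set (α × β)} {B' : Set β} (hB' : ∀ a, ∃ b ∈ B', (a, b) ∈ R) :
    coverNum R ≤ B'.ncard :=
  Nat.sInf_le ⟨B', hB', rfl⟩

theorem exists_cover_ncard_eq_coverNum {R : Set (α × β)} (hR : ∀ a, ∃ b, (a, b) ∈ R) :
    ∃ B' : Set β, (∀ a, ∃ b ∈ B', (a, b) ∈ R) ∧ B'.ncard = coverNum R := by
  obtain ⟨B', hB', hcard⟩ := Nat.sInf_mem (s := {n | ∃ B' : Set β,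
    (∀ a : α, ∃ b ∈ B', (a, b) ∈ R) ∧ n = B'.ncard})
    ⟨_, univ, fun a => (hR a).imp fun _ hb => ⟨mem_univ _, hb⟩, rfl⟩
  exact ⟨B', hB', hcard.symm⟩

theorem nat_card_le_ncard_of_forall_exists [Finite α] [Finite β] {S : Set (α × β)}
    (hS : ∀ a, ∃ b, (a, b) ∈ S) : Nat.card α ≤ S.ncard := by
  have himage : Prod.fst '' S = univ :=
    eq_univ_of_forall fun a => (hS a).elim fun b hb => ⟨(a, b), hb, rfl⟩
  calc Nat.card α = (Prod.fst '' S).ncard := by rw [himage, ncard_univ]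
    _ ≤ S.ncard := ncard_image_le S.toFinite

theorem exists_graph_subset_of_cover {R : Set (α × β)} {B' : Set β}
    (hB' : ∀ a, ∃ b ∈ B', (a, b) ∈ R) :
    ∃ S ⊆ R, (∀ a, ∃ b ∈ B', (a, b) ∈ S) ∧ S.ncard = Nat.card α := by
  choose f hfB hfR using hB'
  refine ⟨range fun a => (a, f a), range_subset_iff.2 hfR,
    fun a => ⟨f a, hfB a, a, rfl⟩, ?_⟩
  rw [← image_univ, ncard_image_of_injective _ fun a a' h => congrArg Prod.fst h, ncard_univ]

end

theorem integral_witness_minimum_size_general {α β γ : Type}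
    [Fintype α] [Fintype β] [Fintype γ] [Nonempty γ]
    (R1 : Set (α × β))
    (hA : ∀ a : α, ∃ b, (a, b) ∈ R1) :
    IsLeast {n | ∃ (S1 : Set (α × β)) (B' : Set β),
        S1 ⊆ R1 ∧
        qmat S1 (B' ×ˢ (Set.univ : Set γ)) =
          qmat R1 ((Set.univ : Set β) ×ˢ (Set.univ : Set γ)) ∧
        n = S1.ncard + (B' ×ˢ (Set.univ : Set γ)).ncard}
      (Fintype.card α + Fintype.card γ * coverNum R1) := by
  simp only [qmat_univ_prod_univ hA, qmat_prod_univ_eq_univ_iff, ncard_prod, ncard_univ,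
    Nat.card_eq_fintype_card]
  constructor
  · obtain ⟨B', hB', hB'card⟩ := exists_cover_ncard_eq_coverNum hA
    obtain ⟨S1, hS1R, hS1B', hS1card⟩ := exists_graph_subset_of_cover hB'
    refine ⟨S1, B', hS1R, hS1B', ?_⟩
    rw [hS1card, hB'card, Nat.card_eq_fintype_card, Nat.mul_comm]
  · rintro n ⟨S1, B', hS1R, hS1B', rfl⟩
    have hS1 : Fintype.card α ≤ S1.ncard := by
      rw [← Nat.card_eq_fintype_card]
      exact nat_card_le_ncard_of_forall_exists fun a => (hS1B' a).imp fun _ hb => hb.2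
    have hB' : coverNum R1 ≤ B'.ncard :=
      coverNum_le_ncard fun a => (hS1B' a).imp fun _ hb => ⟨hb.1, hS1R hb.2⟩
    rw [Nat.mul_comm B'.ncard]
    exact Nat.add_le_add hS1 (Nat.mul_le_mul_left _ hB')

/-- For `Q_matrix(A,C) :- R₁(A,B), R₂(B,C)` with `R₂ = B × C` a
full Cartesian product and `R₁` having no dangling tuples, the minimum size of
a sub-database `(R₁', R₂')` with `Q_matrix(R₁',R₂') = Q_matrix(R₁,R₂)` and
`R₂'` integral (i.e. `R₂' = (π_B R₂') × C`) equals `|A| + |C| · x*`, where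
`x*` is the minimum size of a covering subset `B' ⊆ B`. -/
theorem integral_witness_minimum_size {α β γ : Type}
    [Fintype α] [Fintype β] [Fintype γ] [Nonempty γ]
    (R1 : Set (α × β))
    (hA : ∀ a : α, ∃ b, (a, b) ∈ R1) (hB : ∀ b : β, ∃ a, (a, b) ∈ R1) :
    IsLeast {n | ∃ (S1 : Set (α × β)) (B' : Set β),
        S1 ⊆ R1 ∧
        qmat S1 (B' ×ˢ (Set.univ : Set γ)) =
          qmat R1 ((Set.univ : Set β) ×ˢ (Set.univ : Set γ)) ∧
        n = S1.ncard + (B' ×ˢ (Set.univ : Set γ)).ncard}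
      (Fintype.card α + Fintype.card γ * coverNum R1) :=
  integral_witness_minimum_size_general R1 hA
end

section
/- For Q_matrix(A,C) :- R_1(A,B), R_2(B,C) with R_2 = (π_B R_2) × (π_C R_2) a Cartesian product, there always exists a smallest witness to Q_matrix(D) that is integral, i.e., whose R_2-part is itself a Cartesian product of a subset of B-values with all of π_C R_2. -/
/-!
A smallest witness exists because sizes are natural numbers. To make it integral, take any
witness `(S₁, S₂)` and the column `c ∈ C₀` whose fibre `B' = {b | (b, c) ∈ S₂}` is smallest.
As `R₂ = B₀ × C₀`, the answer of the query is `A' × C₀` for a set `A'` of `a`-values, and `B'`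
already serves every `a ∈ A'` at column `c` through `S₁`; so `(S₁, B' × C₀)` is again a
witness, and `|B' × C₀| = |C₀| · |B'| ≤ ∑_c |fibre of S₂ at c| = |S₂|`.
-/

open Set

variable {α β γ : Type}

def IsWitness (R1 : Set (α × β)) (R2 : Set (β × γ)) (S1 : Set (α × β)) (S2 : Set (β × γ)) :
    Prop :=
  S1 ⊆ R1 ∧ S2 ⊆ R2 ∧ qmat S1 S2 = qmat R1 R2

theorem exists_isWitness_forall_ncard_le (R1 : Set (α × β)) (R2 : Set (β × γ)) :
    ∃ S1 S2, IsWitness R1 R2 S1 S2 ∧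
      ∀ T1 T2, IsWitness R1 R2 T1 T2 → S1.ncard + S2.ncard ≤ T1.ncard + T2.ncard := by
  obtain ⟨⟨S1, S2⟩, hS, hmin⟩ := (measure fun S : Set (α × β) × Set (β × γ) =>
    S.1.ncard + S.2.ncard).wf.has_min {S | IsWitness R1 R2 S.1 S.2}
    ⟨(R1, R2), subset_rfl, subset_rfl, rfl⟩
  exact ⟨S1, S2, hS, fun T1 T2 hT => not_lt.1 (hmin (T1, T2) hT)⟩

theorem ncard_eq_sum_ncard_preimage_mk {T : Set (β × γ)} {C : Set γ}
    (hT : T.Finite) (hC : C.Finite) (hTC : MapsTo Prod.snd T C) :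
    T.ncard = ∑ c ∈ hC.toFinset, ((·, c) ⁻¹' T).ncard := by
  have hunion : T = ⋃ c ∈ C, ((·, c) ⁻¹' T) ×ˢ {c} := by
    ext ⟨b, c⟩
    simp only [mem_iUnion, mem_prod, mem_preimage, mem_singleton_iff, exists_prop]
    exact ⟨fun h => ⟨c, hTC h, h, rfl⟩, by rintro ⟨_, _, h, rfl⟩; exact h⟩
  rw [← finsum_mem_eq_finite_toFinset_sum _ hC]
  conv_lhs => rw [hunion]
  rw [hC.ncard_biUnion]
  · simp
  · exact fun c _ => (hT.preimage (Prod.mk_left_injective c).injOn).prod (finite_singleton c)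
  · intro c _ c' _ hcc'
    exact disjoint_prod.2 (Or.inr (disjoint_singleton.2 hcc'))

theorem exists_ncard_preimage_mk_prod_le {T : Set (β × γ)} {C : Set γ}
    (hT : T.Finite) (hC : C.Finite) (hCne : C.Nonempty) (hTC : MapsTo Prod.snd T C) :
    ∃ c ∈ C, (((·, c) ⁻¹' T) ×ˢ C).ncard ≤ T.ncard := by
  obtain ⟨c, hc, hmin⟩ := exists_min_image C (fun c => ((·, c) ⁻¹' T).ncard) hC hCne
  refine ⟨c, hc, ?_⟩
  calc (((·, c) ⁻¹' T) ×ˢ C).ncard = hC.toFinset.card • ((·, c) ⁻¹' T).ncard := by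
        rw [ncard_prod, ncard_eq_toFinset_card C hC, smul_eq_mul, mul_comm]
    _ ≤ ∑ c ∈ hC.toFinset, ((·, c) ⁻¹' T).ncard :=
        Finset.card_nsmul_le_sum _ _ _ fun c' hc' => hmin c' (hC.mem_toFinset.1 hc')
    _ = T.ncard := (ncard_eq_sum_ncard_preimage_mk hT hC hTC).symm

theorem qmat_prod (X : Set (α × β)) (Y : Set β) (C : Set γ) :
    qmat X (Y ×ˢ C) = {a | ∃ b, (a, b) ∈ X ∧ b ∈ Y} ×ˢ C := by
  ext ⟨a, c⟩
  simp only [qmat, mem_ofPred_eq, mem_prod]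
  exact ⟨fun ⟨b, hab, hb, hc⟩ => ⟨⟨b, hab, hb⟩, hc⟩, fun ⟨⟨b, hab, hb⟩, hc⟩ => ⟨b, hab, hb, hc⟩⟩

theorem isWitness_preimage_mk_prod {R1 S1 : Set (α × β)} {S2 : Set (β × γ)} {B0 : Set β}
    {C0 : Set γ} (hS : IsWitness R1 (B0 ×ˢ C0) S1 S2) {c : γ} (hc : c ∈ C0) :
    IsWitness R1 (B0 ×ˢ C0) S1 (((·, c) ⁻¹' S2) ×ˢ C0) := by
  obtain ⟨hS1, hS2, hq⟩ := hS
  refine ⟨hS1, prod_mono_left fun b hb => (hS2 hb).1, ?_⟩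
  rw [qmat_prod, qmat_prod]
  congr 1
  ext a
  simpa [qmat, hc] using Set.ext_iff.1 hq (a, c)

theorem exists_isWitness_prod_ncard_le {R1 S1 : Set (α × β)} {S2 : Set (β × γ)} {B0 : Set β}
    {C0 : Set γ} (hS : IsWitness R1 (B0 ×ˢ C0) S1 S2) (hS2 : S2.Finite) (hC : C0.Finite) :
    ∃ B' ⊆ B0, IsWitness R1 (B0 ×ˢ C0) S1 (B' ×ˢ C0) ∧ (B' ×ˢ C0).ncard ≤ S2.ncard := by
  rcases C0.eq_empty_or_nonempty with rfl | hCne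
  · exact ⟨∅, empty_subset _, ⟨hS.1, by simp, by simp [qmat]⟩, by simp⟩
  obtain ⟨c, hc, hle⟩ :=
    exists_ncard_preimage_mk_prod_le hS2 hC hCne fun p hp => (hS.2.1 hp).2
  exact ⟨_, fun b hb => (hS.2.1 hb).1, isWitness_preimage_mk_prod hS hc, hle⟩

theorem exists_integral_smallest_witness_general {α β γ : Type}
    (R1 : Set (α × β)) (B0 : Set β) (C0 : Set γ)
    (hB : B0.Finite) (hC : C0.Finite) :
    ∃ (S1 : Set (α × β)) (S2 : Set (β × γ)),
      S1 ⊆ R1 ∧ S2 ⊆ B0 ×ˢ C0 ∧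
      qmat S1 S2 = qmat R1 (B0 ×ˢ C0) ∧
      (∀ (T1 : Set (α × β)) (T2 : Set (β × γ)), T1 ⊆ R1 → T2 ⊆ B0 ×ˢ C0 →
        qmat T1 T2 = qmat R1 (B0 ×ˢ C0) →
        S1.ncard + S2.ncard ≤ T1.ncard + T2.ncard) ∧
      ∃ B' : Set β, B' ⊆ B0 ∧ S2 = B' ×ˢ C0 := by
  obtain ⟨S1, S2, hS, hmin⟩ := exists_isWitness_forall_ncard_le R1 (B0 ×ˢ C0)
  obtain ⟨B', hB', ⟨hS1, hS2, hq⟩, hle⟩ :=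
    exists_isWitness_prod_ncard_le hS ((hB.prod hC).subset hS.2.1) hC
  refine ⟨S1, B' ×ˢ C0, hS1, hS2, hq, fun T1 T2 hT1 hT2 hqT => ?_, B', hB', rfl⟩
  exact (Nat.add_le_add_left hle _).trans (hmin T1 T2 ⟨hT1, hT2, hqT⟩)

/-- For `Q_matrix(A,C) :- R₁(A,B), R₂(B,C)` with
`R₂ = B₀ × C₀` a Cartesian product, there always exists a smallest witness to
`Q_matrix(D)` that is integral, i.e. whose `R₂`-part is itself a Cartesian
product of a subset of `B`-values with all of `C₀ = π_C R₂`. -/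
theorem exists_integral_smallest_witness {α β γ : Type}
    (R1 : Set (α × β)) (B0 : Set β) (C0 : Set γ)
    (h1 : R1.Finite) (hB : B0.Finite) (hC : C0.Finite) :
    ∃ (S1 : Set (α × β)) (S2 : Set (β × γ)),
      S1 ⊆ R1 ∧ S2 ⊆ B0 ×ˢ C0 ∧
      qmat S1 S2 = qmat R1 (B0 ×ˢ C0) ∧
      (∀ (T1 : Set (α × β)) (T2 : Set (β × γ)), T1 ⊆ R1 → T2 ⊆ B0 ×ˢ C0 →
        qmat T1 T2 = qmat R1 (B0 ×ˢ C0) →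
        S1.ncard + S2.ncard ≤ T1.ncard + T2.ncard) ∧
      ∃ B' : Set β, B' ⊆ B0 ∧ S2 = B' ×ˢ C0 :=
  exists_integral_smallest_witness_general R1 B0 C0 hB hC
end

section
/- Reduction correctness for set cover to SWP for Q_cover(A) :- R_1(A,B), R_2(B): given a set cover instance (U, S), construct R_1 = {(a_u, b_S) : u ∈ S} and R_2 = {b_S : S ∈ S}. Then (U,S) has a cover of size at most k if and only if there exists a sub-database D' ⊆ D with Q_cover(D') = Q_cover(D) and |D'| ≤ |U| + k. -/
/-!
Under the construction the answers of the full database are exactly `U`. A cover `C` yields the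
sub-database consisting of one tuple `(u, s_u)` with `u ∈ s_u ∈ C` for each `u ∈ U`, together
with `C` itself. Conversely, a sub-database with answer set `U` needs a distinct `R₁`-tuple for
each `u ∈ U`, so `|R₁'| ≥ |U|`, and the sets kept in `R₂'` form a cover of size `≤ k`.
-/

open Set

/-- `Q_cover` semantics: `Q_cover(R₁, R₂) = {a : ∃ b, (a,b) ∈ R₁ ∧ b ∈ R₂}`. -/
def qcover {α β : Type} (R1 : Set (α × β)) (R2 : Set β) : Set α :=
  {a | ∃ b, (a, b) ∈ R1 ∧ b ∈ R2}

section qcover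

variable {α β : Type}

theorem qcover_subset_image_fst (R1 : Set (α × β)) (R2 : Set β) :
    qcover R1 R2 ⊆ Prod.fst '' R1 :=
  fun _ ⟨_, hab, _⟩ => ⟨_, hab, rfl⟩

theorem ncard_qcover_le {R1 : Set (α × β)} (hR1 : R1.Finite) (R2 : Set β) :
    (qcover R1 R2).ncard ≤ R1.ncard :=
  (ncard_le_ncard (qcover_subset_image_fst R1 R2) (hR1.image _)).trans (ncard_image_le hR1)

theorem qcover_image_graph {A : Set α} {R2 : Set β} {g : α → β} (hg : ∀ a ∈ A, g a ∈ R2) :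
    qcover ((fun a => (a, g a)) '' A) R2 = A := by
  ext a
  constructor
  · rintro ⟨b, ⟨a', ha', hab⟩, -⟩
    cases hab
    exact ha'
  · exact fun ha => ⟨g a, mem_image_of_mem _ ha, hg a ha⟩

end qcover

section incidence

variable {α : Type} (S : Finset (Finset α))

theorem qcover_incidence :
    qcover {p : α × Finset α | p.2 ∈ S ∧ p.1 ∈ p.2} ↑S = {a | ∃ s ∈ S, a ∈ s} := by
  ext a
  exact ⟨fun ⟨s, ⟨hs, has⟩, _⟩ => ⟨s, hs, has⟩, fun ⟨s, hs, has⟩ => ⟨s, ⟨hs, has⟩, hs⟩⟩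

theorem finite_incidence : {p : α × Finset α | p.2 ∈ S ∧ p.1 ∈ p.2}.Finite :=
  ((S.finite_toSet.biUnion fun s _ => s.finite_toSet).prod S.finite_toSet).subset
    fun _ hp => ⟨mem_biUnion hp.1 hp.2, hp.1⟩

end incidence

theorem setCover_to_SWP_qcover_general {α : Type}
    (U : Finset α) (S : Finset (Finset α))
    (hS : ∀ s ∈ S, s ⊆ U) (hcov : ∀ u ∈ U, ∃ s ∈ S, u ∈ s) (k : ℕ) :
    (∃ C ⊆ S, (∀ u ∈ U, ∃ s ∈ C, u ∈ s) ∧ C.card ≤ k) ↔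
    (∃ (R1' : Set (α × Finset α)) (R2' : Set (Finset α)),
      R1' ⊆ {p | p.2 ∈ S ∧ p.1 ∈ p.2} ∧ R2' ⊆ ↑S ∧
      qcover R1' R2' = qcover {p | p.2 ∈ S ∧ p.1 ∈ p.2} ↑S ∧
      R1'.ncard + R2'.ncard ≤ U.card + k) := by
  have hfull : qcover {p : α × Finset α | p.2 ∈ S ∧ p.1 ∈ p.2} ↑S = ↑U := by
    rw [qcover_incidence]
    ext u
    exact ⟨fun ⟨s, hs, hus⟩ => hS s hs hus, hcov u⟩
  rw [hfull]
  constructor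
  · rintro ⟨C, hCS, hC, hCk⟩
    choose! g hgC hug using hC
    have hR1 : ((fun u => (u, g u)) '' ↑U).ncard ≤ U.card :=
      ncard_coe_finset U ▸ ncard_image_le U.finite_toSet
    refine ⟨(fun u => (u, g u)) '' ↑U, ↑C, ?_, Finset.coe_subset.2 hCS, qcover_image_graph hgC, ?_⟩
    · rintro _ ⟨u, hu, rfl⟩
      exact ⟨hCS (hgC u hu), hug u hu⟩
    · rw [ncard_coe_finset]
      omega
  · rintro ⟨R1', R2', hR1, hR2, hq, hcard⟩
    have hR2fin : R2'.Finite := S.finite_toSet.subset hR2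
    have hU : U.card ≤ R1'.ncard := by
      rw [← ncard_coe_finset, ← hq]
      exact ncard_qcover_le ((finite_incidence S).subset hR1) R2'
    refine ⟨hR2fin.toFinset, fun s hs => hR2 (hR2fin.mem_toFinset.1 hs), fun u hu => ?_, ?_⟩
    · obtain ⟨s, hus, hs⟩ : u ∈ qcover R1' R2' := hq ▸ hu
      exact ⟨s, hR2fin.mem_toFinset.2 hs, (hR1 hus).2⟩
    · rw [← ncard_eq_toFinset_card R2' hR2fin]
      omega

/-- Reduction correctness for set cover to SWP for
`Q_cover(A) :- R₁(A,B), R₂(B)`: given a set cover instance `(U, S)`, construct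
`R₁ = {(a_u, b_S) : u ∈ S}` and `R₂ = {b_S : S ∈ S}`. Then `(U,S)` has a cover
of size at most `k` iff there is a sub-database `D' ⊆ D` with
`Q_cover(D') = Q_cover(D)` and `|D'| ≤ |U| + k`. -/
theorem setCover_to_SWP_qcover {α : Type} [DecidableEq α]
    (U : Finset α) (S : Finset (Finset α))
    (hS : ∀ s ∈ S, s ⊆ U) (hcov : ∀ u ∈ U, ∃ s ∈ S, u ∈ s) (k : ℕ) :
    (∃ C ⊆ S, (∀ u ∈ U, ∃ s ∈ C, u ∈ s) ∧ C.card ≤ k) ↔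
    (∃ (R1' : Set (α × Finset α)) (R2' : Set (Finset α)),
      R1' ⊆ {p | p.2 ∈ S ∧ p.1 ∈ p.2} ∧ R2' ⊆ ↑S ∧
      qcover R1' R2' = qcover {p | p.2 ∈ S ∧ p.1 ∈ p.2} ↑S ∧
      R1'.ncard + R2'.ncard ≤ U.card + k) :=
  setCover_to_SWP_qcover_general U S hS hcov k
end

section
/- Reduction correctness for set cover to approximate SWP of Q_matrix: given a set cover instance (U,S) with |U| = n, construct R_1 = {(a_u, b_S) : u ∈ S} and R_2 = {b_S : S ∈ S} × {c_u : u ∈ U}. Then (U,S) has a cover of size at most k if and only if SWP(Q_matrix, D) has an integral solution of size at most n(k+1). -/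
/-!
Because `R₂'` is a product `B' × dom(C)`, the output `Q_matrix(R₁', R₂')` is all of
`dom(A) × dom(C)` exactly when every `a_u` has an `R₁'`-edge to some `b_S` with `S ∈ B'`; as
`R₁' ⊆ R₁`, the sets so reached then cover `U`. A cover `C` yields a witness with one `R₁'`-tuple
per element and `|C| · n` tuples in `R₂'`. Conversely every witness has at least `n` tuples in
`R₁'` and `|B'| · n` in `R₂'`, while the sets reached from the elements form a cover of size at
most `|B'|`.
-/

open Set

lemma qmat_prod_univ_self_eq_univ_iff {α β : Type} (X : Set (α × β)) (B : Set β) :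
    qmat X (B ×ˢ (univ : Set α)) = univ ↔ ∀ a, ∃ b ∈ B, (a, b) ∈ X := by
  simp only [eq_univ_iff_forall, qmat, mem_ofPred_eq, mem_prod, mem_univ, and_true]
  refine ⟨fun h a => ?_, fun h p => ?_⟩
  · obtain ⟨b, hX, hB⟩ := h (a, a)
    exact ⟨b, hB, hX⟩
  · obtain ⟨b, hB, hX⟩ := h p.1
    exact ⟨b, hX, hB⟩

lemma nat_card_le_ncard_of_forall_exists_mem {α β : Type*} {X : Set (α × β)} (hX : X.Finite)
    (h : ∀ a, ∃ b, (a, b) ∈ X) : Nat.card α ≤ X.ncard := by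
  have hfst : Prod.fst '' X = univ :=
    eq_univ_of_forall fun a => let ⟨b, hb⟩ := h a; ⟨(a, b), hb, rfl⟩
  calc Nat.card α = (Prod.fst '' X).ncard := by rw [hfst, ncard_univ]
    _ ≤ X.ncard := ncard_image_le hX

section SetCover

variable {α : Type} [Fintype α] {S : Finset (Finset α)} {k : ℕ}

lemma exists_witness_of_cover {C : Finset (Finset α)} (hCS : C ⊆ S)
    (hC : ∀ u : α, ∃ s ∈ C, u ∈ s) (hCk : C.card ≤ k) :
    ∃ (S1 : Set (α × Finset α)) (B' : Set (Finset α)),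
      S1 ⊆ {p | p.2 ∈ S ∧ p.1 ∈ p.2} ∧ B' ⊆ ↑S ∧ (∀ u, ∃ s ∈ B', (u, s) ∈ S1) ∧
      S1.ncard + (B' ×ˢ (univ : Set α)).ncard ≤ Fintype.card α * (k + 1) := by
  choose f hfC hfmem using hC
  refine ⟨range fun u => (u, f u), range f, ?_, ?_, fun u => ⟨f u, ⟨u, rfl⟩, u, rfl⟩, ?_⟩
  · rintro _ ⟨u, rfl⟩
    exact ⟨hCS (hfC u), hfmem u⟩
  · rintro _ ⟨u, rfl⟩
    exact hCS (hfC u)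
  · have hrange : (range f).ncard ≤ k :=
      calc (range f).ncard ≤ (C : Set (Finset α)).ncard :=
            ncard_le_ncard (range_subset_iff.2 hfC)
        _ = C.card := ncard_coe_finset C
        _ ≤ k := hCk
    rw [ncard_range_of_injective fun _ _ h => congrArg Prod.fst h, ncard_prod, ncard_univ,
      Nat.card_eq_fintype_card]
    nlinarith

lemma exists_cover_of_witness {S1 : Set (α × Finset α)} {B' : Set (Finset α)}
    (hS1 : S1 ⊆ {p | p.2 ∈ S ∧ p.1 ∈ p.2}) (hB' : B' ⊆ ↑S) (hrows : ∀ u, ∃ s ∈ B', (u, s) ∈ S1)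
    (hsize : S1.ncard + (B' ×ˢ (univ : Set α)).ncard ≤ Fintype.card α * (k + 1)) :
    ∃ C ⊆ S, (∀ u : α, ∃ s ∈ C, u ∈ s) ∧ C.card ≤ k := by
  classical
  choose g hgB hgS1 using hrows
  refine ⟨Finset.univ.image g, ?_, fun u => ⟨g u, Finset.mem_image_of_mem g (Finset.mem_univ u),
    (hS1 (hgS1 u)).2⟩, ?_⟩
  · intro s hs
    obtain ⟨u, -, rfl⟩ := Finset.mem_image.1 hs
    exact hB' (hgB u)
  · have hS1card : Fintype.card α ≤ S1.ncard := by
      rw [← Nat.card_eq_fintype_card]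
      exact nat_card_le_ncard_of_forall_exists_mem (toFinite S1) fun u => ⟨g u, hgS1 u⟩
    have hCB : (Finset.univ.image g).card ≤ B'.ncard := by
      rw [← ncard_coe_finset, Finset.coe_image, Finset.coe_univ, image_univ]
      exact ncard_le_ncard (range_subset_iff.2 hgB)
    have hCn : (Finset.univ.image g).card ≤ Fintype.card α := Finset.card_image_le
    rw [ncard_prod, ncard_univ, Nat.card_eq_fintype_card] at hsize
    rcases (Fintype.card α).eq_zero_or_pos with hn | hn
    · omega
    · exact hCB.trans (Nat.le_of_mul_le_mul_right (c := Fintype.card α) (by nlinarith) hn)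

end SetCover

theorem setCover_to_SWP_qmatrix_general {α : Type} [Fintype α]
    (S : Finset (Finset α)) (hcov : ∀ u : α, ∃ s ∈ S, u ∈ s) (k : ℕ) :
    (∃ C ⊆ S, (∀ u : α, ∃ s ∈ C, u ∈ s) ∧ C.card ≤ k) ↔
    (∃ (S1 : Set (α × Finset α)) (B' : Set (Finset α)),
      S1 ⊆ {p | p.2 ∈ S ∧ p.1 ∈ p.2} ∧ B' ⊆ ↑S ∧
      qmat S1 (B' ×ˢ (Set.univ : Set α)) =
        qmat {p : α × Finset α | p.2 ∈ S ∧ p.1 ∈ p.2}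
          ((↑S : Set (Finset α)) ×ˢ (Set.univ : Set α)) ∧
      S1.ncard + (B' ×ˢ (Set.univ : Set α)).ncard ≤ Fintype.card α * (k + 1)) := by
  have hfull : qmat {p : α × Finset α | p.2 ∈ S ∧ p.1 ∈ p.2} ((↑S : Set (Finset α)) ×ˢ univ)
      = univ :=
    (qmat_prod_univ_self_eq_univ_iff _ _).2 fun u =>
      let ⟨s, hs, hus⟩ := hcov u; ⟨s, hs, hs, hus⟩
  simp only [hfull, qmat_prod_univ_self_eq_univ_iff]
  exact ⟨fun ⟨_, hCS, hC, hCk⟩ => exists_witness_of_cover hCS hC hCk,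
    fun ⟨_, _, hS1, hB', hrows, hsize⟩ => exists_cover_of_witness hS1 hB' hrows hsize⟩

/-- Reduction correctness for set cover to approximate SWP of
`Q_matrix`: given a set cover instance `(U,S)` with `|U| = n` (here `U` is the
finite type `α`), construct `R₁ = {(a_u, b_S) : u ∈ S}` and
`R₂ = {b_S : S ∈ S} × {c_u : u ∈ U}` (a full Cartesian product). Then `(U,S)`
has a cover of size at most `k` iff `SWP(Q_matrix, D)` has an integral
solution of size at most `n(k+1)`. -/
theorem setCover_to_SWP_qmatrix {α : Type} [Fintype α] [DecidableEq α]
    (S : Finset (Finset α)) (hcov : ∀ u : α, ∃ s ∈ S, u ∈ s) (k : ℕ) :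
    (∃ C ⊆ S, (∀ u : α, ∃ s ∈ C, u ∈ s) ∧ C.card ≤ k) ↔
    (∃ (S1 : Set (α × Finset α)) (B' : Set (Finset α)),
      S1 ⊆ {p | p.2 ∈ S ∧ p.1 ∈ p.2} ∧ B' ⊆ ↑S ∧
      qmat S1 (B' ×ˢ (Set.univ : Set α)) =
        qmat {p : α × Finset α | p.2 ∈ S ∧ p.1 ∈ p.2}
          ((↑S : Set (Finset α)) ×ˢ (Set.univ : Set α)) ∧
      S1.ncard + (B' ×ˢ (Set.univ : Set α)).ncard ≤ Fintype.card α * (k + 1)) :=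
  setCover_to_SWP_qmatrix_general S hcov k
end
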